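/- arXiv:1312.4159 — 2 statements merged into one kernel-verified Lean document; each statement's English description precedes it below -/
import Mathlib

section
/- (Generalized Dwork Lemma) Let R be a π-torsion free O_F-algebra and φ : R → R an O_F-algebra homomorphism with φ(x) ≡ x^q mod π for all x ∈ R. If (y_n)_{n≥0} is a sequence in R with φ(y_{n-1}) ≡ y_n mod π^n for all n ≥ 1, then there exists a sequence (x_n)_{n≥0} in R such that for every n, y_n = Σ_{j=0}^{n} π^j x_j^{q^{n-j}}. -/
/-- Generalized Dwork Lemma. Let `O` be the ring of integers of a
finite extension of `ℚ_p` with uniformizer `π` and residue cardinality `q = p^e`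
(so that `p ∈ (π)`), and let `R` be a `π`-torsion free `O`-algebra. If `φ : R → R`
is an `O`-algebra homomorphism with `φ(x) ≡ x^q mod π` for all `x`, and `(y_n)` is
a sequence with `φ(y_{n-1}) ≡ y_n mod π^n` for all `n ≥ 1`, then `(y_n)` lies in
the image of the ghost map: there is a sequence `(x_n)` in `R` with
`y_n = Σ_{j=0}^{n} π^j x_j^{q^{n-j}}` for all `n`. -/
theorem generalized_dwork_lemma (O R : Type*) [CommRing O] [CommRing R] [Algebra O R]
    (π : O) (p e q : ℕ) (hp : p.Prime) (he : 1 ≤ e) (hq : q = p ^ e)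
    (hπp : (p : O) ∈ Ideal.span {π})
    (htf : ∀ r : R, algebraMap O R π * r = 0 → r = 0)
    (φ : R →ₐ[O] R)
    (hφ : ∀ x : R, φ x - x ^ q ∈ Ideal.span {algebraMap O R π})
    (y : ℕ → R)
    (hy : ∀ n : ℕ, φ (y n) - y (n + 1) ∈ Ideal.span {algebraMap O R π ^ (n + 1)}) :
    ∃ x : ℕ → R, ∀ n : ℕ,
      y n = ∑ j ∈ Finset.range (n + 1),
        algebraMap O R π ^ j * x j ^ q ^ (n - j) := by
  set c : R := algebraMap O R π with hc
  -- c divides p in R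
  have hcp : c ∣ (p : R) := by
    obtain ⟨u, hu⟩ := Ideal.mem_span_singleton.mp hπp
    exact ⟨algebraMap O R u, by rw [← map_natCast (algebraMap O R) p, hu, map_mul]⟩
  -- torsion-freeness for powers
  have htfpow : ∀ (j : ℕ) (r : R), c ^ j * r = 0 → r = 0 := by
    intro j
    induction j with
    | zero => intro r h; simpa using h
    | succ j ih =>
      intro r h
      apply htf
      apply ih
      rw [← mul_assoc, ← pow_succ]
      exact h
  -- key divisibility lemma, one step
  have lemB : ∀ (k : ℕ) (a b : R), 1 ≤ k → c ^ k ∣ a - b → c ^ (k + 1) ∣ a ^ p - b ^ p := by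
    intro k a b hk hab
    have hgeo : (∑ i ∈ Finset.range p, a ^ i * b ^ (p - 1 - i)) * (a - b) = a ^ p - b ^ p :=
      geom_sum₂_mul a b p
    have hsum : c ∣ ∑ i ∈ Finset.range p, a ^ i * b ^ (p - 1 - i) := by
      have h1 : c ∣ (∑ i ∈ Finset.range p, a ^ i * b ^ (p - 1 - i)) - (p : R) * b ^ (p - 1) := by
        have hb : ∀ i ∈ Finset.range p, b ^ i * b ^ (p - 1 - i) = b ^ (p - 1) := by
          intro i hi
          rw [← pow_add]
          congr 1
          have := Finset.mem_range.mp hi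
          omega
        have key : (∑ i ∈ Finset.range p, (a ^ i - b ^ i) * b ^ (p - 1 - i))
            = (∑ i ∈ Finset.range p, a ^ i * b ^ (p - 1 - i)) - (p : R) * b ^ (p - 1) := by
          rw [Finset.sum_congr rfl (fun i _ => sub_mul (a ^ i) (b ^ i) (b ^ (p - 1 - i))),
            Finset.sum_sub_distrib]
          congr 1
          rw [Finset.sum_congr rfl hb, Finset.sum_const, Finset.card_range, nsmul_eq_mul]
        rw [← key]
        refine Finset.dvd_sum fun i _ => Dvd.dvd.mul_right ?_ _
        exact dvd_trans (dvd_trans (dvd_pow_self c (by omega : k ≠ 0)) hab)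
          (sub_dvd_pow_sub_pow a b i)
      have h2 : c ∣ (p : R) * b ^ (p - 1) := hcp.mul_right _
      have := dvd_add h1 h2
      simpa using this
    calc c ^ (k + 1) = c ^ k * c := by rw [pow_succ]
    _ ∣ (a - b) * (∑ i ∈ Finset.range p, a ^ i * b ^ (p - 1 - i)) := mul_dvd_mul hab hsum
    _ = a ^ p - b ^ p := by rw [mul_comm, hgeo]
  -- iterated: c^k ∣ a - b → c^(k+j) ∣ a^(p^j) - b^(p^j)
  have lemB' : ∀ (j k : ℕ) (a b : R), 1 ≤ k → c ^ k ∣ a - b →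
      c ^ (k + j) ∣ a ^ (p ^ j) - b ^ (p ^ j) := by
    intro j
    induction j with
    | zero => intro k a b _ h; simpa using h
    | succ j ih =>
      intro k a b hk h
      have := lemB (k + j) (a ^ (p ^ j)) (b ^ (p ^ j)) (le_trans hk (Nat.le_add_right _ _))
        (ih k a b hk h)
      rw [← pow_mul, ← pow_mul, ← pow_succ] at this
      exact this
  -- lemC : c ∣ a - b → c^(m+1) ∣ a^(q^m) - b^(q^m)
  have lemC : ∀ (m : ℕ) (a b : R), c ∣ a - b → c ^ (m + 1) ∣ a ^ (q ^ m) - b ^ (q ^ m) := by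
    intro m a b h
    have h1 := lemB' (e * m) 1 a b le_rfl (by simpa using h)
    rw [pow_mul p e m, ← hq] at h1
    exact dvd_trans (pow_dvd_pow c (by nlinarith)) h1
  -- abbreviation for the ghost sum
  set S : (ℕ → R) → ℕ → R := fun x m => ∑ j ∈ Finset.range (m + 1), c ^ j * x j ^ q ^ (m - j)
    with hS
  -- existence by induction
  have exist : ∀ n : ℕ, ∃ x : ℕ → R, ∀ m ≤ n, y m = S x m := by
    intro n
    induction n with
    | zero =>
      refine ⟨fun _ => y 0, fun m hm => ?_⟩
      interval_cases m
      simp [hS]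
    | succ n ih =>
      obtain ⟨x, hx⟩ := ih
      have key : c ^ (n + 1) ∣ y (n + 1) - ∑ j ∈ Finset.range (n + 1), c ^ j * x j ^ q ^ (n + 1 - j) := by
        have h1 : c ^ (n + 1) ∣ φ (y n) - y (n + 1) := by
          have := hy n
          rwa [Ideal.mem_span_singleton] at this
        have h2 : φ (y n) = ∑ j ∈ Finset.range (n + 1), c ^ j * (φ (x j)) ^ q ^ (n - j) := by
          rw [hx n le_rfl]
          simp only [hS]
          rw [map_sum]
          refine Finset.sum_congr rfl fun j _ => ?_
          rw [map_mul, map_pow, map_pow, hc, AlgHom.commutes]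
        have h3 : c ^ (n + 1) ∣ φ (y n) - ∑ j ∈ Finset.range (n + 1), c ^ j * x j ^ q ^ (n + 1 - j) := by
          rw [h2, ← Finset.sum_sub_distrib]
          refine Finset.dvd_sum fun j hj => ?_
          have hjn : j ≤ n := Nat.lt_succ_iff.mp (Finset.mem_range.mp hj)
          have hd : c ∣ φ (x j) - (x j) ^ q := by
            have := hφ (x j)
            rwa [Ideal.mem_span_singleton] at this
          have hC := lemC (n - j) (φ (x j)) ((x j) ^ q) hd
          rw [← pow_mul, ← pow_succ'] at hC
          have hexp : q ^ (n - j + 1) = q ^ (n + 1 - j) := by congr 1; omega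
          rw [hexp] at hC
          have : c ^ (j + (n - j + 1)) ∣ c ^ j * ((φ (x j)) ^ q ^ (n - j) - x j ^ q ^ (n + 1 - j)) := by
            rw [pow_add]
            exact mul_dvd_mul_left _ hC
          rw [mul_sub] at this
          have hexp2 : j + (n - j + 1) = n + 1 := by omega
          rwa [hexp2] at this
        have := dvd_add (dvd_neg.mpr h1) h3
        convert this using 1
        ring
      obtain ⟨t, ht⟩ := key
      refine ⟨Function.update x (n + 1) t, fun m hm => ?_⟩
      rcases Nat.lt_succ_iff_lt_or_eq.mp (Nat.lt_succ_of_le hm) with hm' | hm'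
      · have hm'' : m ≤ n := Nat.lt_succ_iff.mp hm'
        rw [hx m hm'']
        simp only [hS]
        refine Finset.sum_congr rfl fun j hj => ?_
        have : j ≠ n + 1 := by
          have := Finset.mem_range.mp hj; omega
        rw [Function.update_of_ne this]
      · subst hm'
        simp only [hS]
        rw [Finset.sum_range_succ]
        have hlast : Function.update x (n + 1) t (n + 1) = t := Function.update_self _ _ _
        rw [hlast]
        have hrest : ∀ j ∈ Finset.range (n + 1),
            c ^ j * (Function.update x (n + 1) t j) ^ q ^ (n + 1 - j)
              = c ^ j * x j ^ q ^ (n + 1 - j) := by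
          intro j hj
          have : j ≠ n + 1 := by have := Finset.mem_range.mp hj; omega
          rw [Function.update_of_ne this]
        rw [Finset.sum_congr rfl hrest]
        have : y (n + 1) - ∑ j ∈ Finset.range (n + 1), c ^ j * x j ^ q ^ (n + 1 - j)
            = c ^ (n + 1) * t := ht
        simp only [Nat.sub_self, pow_zero, pow_one]
        linear_combination this
  -- uniqueness
  have uniq : ∀ (x x' : ℕ → R) (n : ℕ), (∀ m ≤ n, y m = S x m) → (∀ m ≤ n, y m = S x' m) →
      ∀ j, j ≤ n → x j = x' j := by
    intro x x' n h h' j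
    induction j using Nat.strong_induction_on with
    | _ j IH =>
      intro hj
      have heq : S x j = S x' j := by rw [← h j hj, ← h' j hj]
      simp only [hS] at heq
      rw [Finset.sum_range_succ, Finset.sum_range_succ] at heq
      have hpre : ∀ i ∈ Finset.range j, c ^ i * x i ^ q ^ (j - i) = c ^ i * x' i ^ q ^ (j - i) := by
        intro i hi
        have hij := Finset.mem_range.mp hi
        rw [IH i hij (le_trans (le_of_lt hij) hj)]
      rw [Finset.sum_congr rfl hpre] at heq
      have : c ^ j * (x j - x' j) = 0 := by
        rw [mul_sub]
        simp only [Nat.sub_self, pow_zero, pow_one] at heq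
        linear_combination heq
      have := htfpow j _ this
      exact sub_eq_zero.mp this
  -- glue
  refine ⟨fun n => Classical.choose (exist n) n, fun n => ?_⟩
  have hn := Classical.choose_spec (exist n)
  rw [show (∑ j ∈ Finset.range (n + 1),
      algebraMap O R π ^ j * (fun n => Classical.choose (exist n) n) j ^ q ^ (n - j))
      = S (Classical.choose (exist n)) n from ?_]
  · exact hn n le_rfl
  · simp only [hS]
    refine Finset.sum_congr rfl fun j hj => ?_
    have hjn : j ≤ n := Nat.lt_succ_iff.mp (Finset.mem_range.mp hj)
    have hj1 := Classical.choose_spec (exist j)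
    have := uniq (Classical.choose (exist j)) (Classical.choose (exist n)) j hj1
      (fun m hm => hn m (le_trans hm hjn)) j le_rfl
    rw [← hc, this]
end

section
/- Let k be a field and n ≥ 1. Let y ∈ k[[x]] with ord_x(y) = n, and let l be any intermediate field k((y)) ⊆ l ⊆ k((x)) with the property that every g ∈ l ∩ k[[x]] with 0 < ord_x(g) satisfies ord_x(g) ≥ n. Then l = k((y)). More precisely: every element of l ∩ k[[x]] can be written uniquely as a_0 + a_1 x + ... + a_{n-1} x^{n-1} with a_i ∈ k[[y]], and unless a_1 = ... = a_{n-1} = 0 one can produce an element g of l with 0 < ord_x(g) < n. -/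
/-- The canonical embedding `k[[x]] → k((x))` of power series into the field of
formal Laurent series. -/
noncomputable def psToLaurent (k : Type*) [Field k] :
    PowerSeries k →+* LaurentSeries k :=
  HahnSeries.ofPowerSeries ℤ k

/-!
Restricted to `k⟦X⟧`, `ψ` is a continuous endomorphism `φ` with `φ X = y`, hence
`ord (φ f) = n · ord f`. Dividing repeatedly by `y` with remainders of degree `< n` writes every
power series as `∑_{i<n} φ(b_i) X^i`. The summands have orders `n · ord b_i + i`, pairwise distinct
because they are distinct mod `n`, so the sum has the order of the smallest one; in particular the
representation is unique. If some `b_i` with `i > 0` is nonzero, dividing `∑_{i>0} φ(b_i) X^i ∈ l`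
by a power of `y` leaves an element of `l ∩ k⟦X⟧` of order in `(0, n)`. When no such element
exists, every element of `l`, once multiplied by a power of `y` to become a power series, lies in
`φ(k⟦X⟧)`, so `l = k((y))`.
-/

open PowerSeries Finset

namespace PowerSeries

theorem order_sum_eq_of_forall_lt {R ι : Type*} [Semiring R] [DecidableEq ι] {s : Finset ι}
    {f : ι → R⟦X⟧} {i : ι} (hi : i ∈ s) (h : ∀ j ∈ s, j ≠ i → (f i).order < (f j).order) :
    (∑ j ∈ s, f j).order = (f i).order := by
  rw [← add_sum_erase s f hi]
  have hrest : (∑ j ∈ s.erase i, f j) = 0 ∨ (f i).order < (∑ j ∈ s.erase i, f j).order := by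
    refine sum_induction _ (fun g : R⟦X⟧ => g = 0 ∨ (f i).order < g.order) ?_ (.inl rfl) ?_
    · rintro a b (rfl | ha) (rfl | hb)
      · simp
      · simp [hb]
      · simp [ha]
      · exact .inr (lt_min ha hb |>.trans_le (min_order_le_order_add a b))
    · intro j hj
      exact .inr (h j (mem_of_mem_erase hj) (ne_of_mem_erase hj))
  rcases hrest with hrest | hrest
  · rw [hrest, add_zero]
  · rw [order_add_of_order_ne _ _ hrest.ne, min_eq_left hrest.le]

variable {k : Type*} [Field k]

theorem associated_X_pow_of_order_eq {y : k⟦X⟧} {n : ℕ} (hy : y.order = n) :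
    Associated (X ^ n) y := by
  have hy0 : y ≠ 0 := by rintro rfl; simp at hy
  have hd : y.order.toNat = n := by simp [hy]
  have hu : IsUnit (divXPowOrder y) := by
    rw [isUnit_iff_constantCoeff, constantCoeff_divXPowOrder, isUnit_iff_ne_zero]
    exact coeff_order hy0
  exact ⟨hu.unit, by simpa [hd] using X_pow_order_mul_divXPowOrder (f := y)⟩

theorem dvd_sub_trunc_of_order_eq {y : k⟦X⟧} {n : ℕ} (hy : y.order = n) (f : k⟦X⟧) :
    y ∣ f - trunc n f :=
  (associated_X_pow_of_order_eq hy).dvd_iff_dvd_left.mp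
    ⟨_, sub_eq_of_eq_add (eq_X_pow_mul_shift_add_trunc n f)⟩

theorem eq_zero_of_forall_X_pow_dvd {R : Type*} [Semiring R] {f : R⟦X⟧} (h : ∀ m, X ^ m ∣ f) :
    f = 0 :=
  ext fun j => X_pow_dvd_iff.mp (h (j + 1)) j j.lt_succ_self

end PowerSeries

theorem eq_sum_pow_mul_add_pow_mul_iterate {A : Type*} [CommRing A] (y : A) (t q : A → A)
    (h : ∀ g, g = t g + y * q g) (f : A) (M : ℕ) :
    f = ∑ m ∈ range M, y ^ m * t (q^[m] f) + y ^ M * q^[M] f := by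
  induction M with
  | zero => simp
  | succ M ih =>
    rw [sum_range_succ, Function.iterate_succ_apply', add_assoc, pow_succ, mul_assoc,
      ← mul_add, ← h]
    exact ih

theorem RingHom.exists_comp_eq_of_range_le {A B C : Type*} [Ring A] [Ring B] [Ring C]
    {ι : A →+* B} (hι : Function.Injective ι) {g : C →+* B} (h : g.range ≤ ι.range) :
    ∃ φ : C →+* A, ι.comp φ = g := by
  classical
  let e := RingEquiv.ofLeftInverse (Function.leftInverse_invFun hι)
  refine ⟨e.symm.toRingHom.comp (g.codRestrict _ fun x => h ⟨x, rfl⟩), ?_⟩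
  ext x
  exact (RingEquiv.ofLeftInverse_apply (Function.leftInverse_invFun hι) (e.symm _)).symm.trans
    (congrArg Subtype.val (e.apply_symm_apply _))

section Laurent

variable {k : Type*} [Field k]

theorem psToLaurent_injective : Function.Injective (psToLaurent k) :=
  HahnSeries.ofPowerSeries_injective

theorem order_psToLaurent (f : k⟦X⟧) : (psToLaurent k f).order = f.order.toNat := by
  rcases eq_or_ne f 0 with rfl | hf
  · simp
  have hL : psToLaurent k f ≠ 0 := (map_ne_zero_iff _ psToLaurent_injective).mpr hf
  refine le_antisymm (HahnSeries.order_le_of_coeff_ne_zero ?_) ?_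
  · rw [psToLaurent, HahnSeries.ofPowerSeries_apply_coeff]
    exact coeff_order hf
  · refine (HahnSeries.le_order_iff_forall hL).mpr fun j hj => ?_
    rw [psToLaurent, PowerSeries.coeff_coe]
    split_ifs with hj0
    · rfl
    · exact coeff_of_lt_order_toNat _ (by omega)

theorem mem_range_psToLaurent_of_order_nonneg {u : LaurentSeries k} (hu : 0 ≤ u.order) :
    u ∈ (psToLaurent k).range :=
  ⟨_, LaurentSeries.X_order_mul_powerSeriesPart (Int.toNat_of_nonneg hu)⟩

end Laurent

section Endomorphism

variable {k : Type*} [Field k] {n : ℕ} {y : k⟦X⟧} {φ : k⟦X⟧ →+* k⟦X⟧}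

theorem map_trunc_eq_sum_pow (hφX : φ X = y) (hφC : ∀ a, φ (C a) = C a) (f : k⟦X⟧) (m : ℕ) :
    φ (trunc m f) = ∑ t ∈ range m, C (coeff t f) * y ^ t := by
  have hcomp : φ.comp Polynomial.coeToPowerSeries.ringHom = Polynomial.eval₂RingHom C y :=
    Polynomial.ringHom_ext (by simpa using hφC) (by simpa using hφX)
  rw [← eval₂_trunc_eq_sum_range, ← Polynomial.coe_eval₂RingHom, ← hcomp]
  rfl

variable (hn : 0 < n) (hy : y.order = n) (hφX : φ X = y) (hφC : ∀ a, φ (C a) = C a)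
  (hφcont : ∀ f m, X ^ (n * m) ∣ φ f - φ (trunc m f))
include hn hy hφX hφC hφcont

theorem order_map_eq_mul_order (f : k⟦X⟧) : (φ f).order = n * f.order := by
  rcases eq_or_ne f 0 with rfl | hf
  · simp [hn.ne']
  set m := f.order.toNat
  have hlead : φ (trunc (m + 1) f) = C (coeff m f) * y ^ m := by
    rw [map_trunc_eq_sum_pow hφX hφC, sum_range_succ, add_eq_right]
    exact sum_eq_zero fun t ht => by
      rw [coeff_of_lt_order_toNat t (mem_range.mp ht), map_zero, zero_mul]
  have hlead_order : (φ (trunc (m + 1) f)).order = (n * m : ℕ) := by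
    rw [hlead, order_mul, order_zero_of_unit ((isUnit_iff_ne_zero.mpr (coeff_order hf)).map C),
      order_pow, hy, zero_add, nsmul_eq_mul, mul_comm]
    norm_cast
  have htail : ((n * (m + 1) : ℕ) : ℕ∞) ≤ (φ f - φ (trunc (m + 1) f)).order := by
    obtain ⟨g, hg⟩ := hφcont f (m + 1)
    rw [hg, order_mul, order_X_pow]
    exact le_self_add
  have hlt : (φ (trunc (m + 1) f)).order < (φ f - φ (trunc (m + 1) f)).order :=
    hlead_order ▸ lt_of_lt_of_le (by exact_mod_cast Nat.mul_lt_mul_of_pos_left m.lt_succ_self hn)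
      htail
  rw [← add_sub_cancel (φ (trunc (m + 1) f)) (φ f), order_add_of_order_ne _ _ hlt.ne,
    min_eq_left hlt.le, hlead_order, ← coe_toNat_order hf]
  norm_cast

theorem order_map_mul_X_pow (f : k⟦X⟧) (i : ℕ) : (φ f * X ^ i).order = n * f.order + i := by
  rw [order_mul, order_X_pow, order_map_eq_mul_order hn hy hφX hφC hφcont]

theorem exists_order_sum_map_mul_X_pow_eq {b : Fin n → k⟦X⟧} (hb : b ≠ 0) :
    ∃ i, b i ≠ 0 ∧ (∑ j, φ (b j) * X ^ (j : ℕ)).order = n * (b i).order + i := by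
  classical
  obtain ⟨j₀, hj₀⟩ := Function.ne_iff.mp hb
  obtain ⟨i, -, hmin⟩ := exists_min_image univ (fun j : Fin n => n * (b j).order + (j : ℕ))
    ⟨j₀, mem_univ _⟩
  have hbi : b i ≠ 0 := by
    intro h
    have := hmin j₀ (mem_univ _)
    rw [h, order_zero, ← coe_toNat_order hj₀] at this
    simp [hn.ne'] at this
    norm_cast at this
  refine ⟨i, hbi, ?_⟩
  rw [order_sum_eq_of_forall_lt (mem_univ i), order_map_mul_X_pow hn hy hφX hφC hφcont]
  intro j _ hji
  rw [order_map_mul_X_pow hn hy hφX hφC hφcont, order_map_mul_X_pow hn hy hφX hφC hφcont]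
  refine (hmin j (mem_univ j)).lt_of_ne fun heq => hji (Fin.ext ?_)
  have hbj : b j ≠ 0 := by
    rintro h
    rw [h, order_zero, ← coe_toNat_order hbi] at heq
    simp [hn.ne'] at heq
    norm_cast at heq
  rw [← coe_toNat_order hbi, ← coe_toNat_order hbj] at heq
  norm_cast at heq
  -- `j < n` is the residue of `n * a + j` mod `n`
  simpa [Nat.mul_add_mod, Nat.mod_eq_of_lt] using (congrArg (· % n) heq).symm

theorem sum_map_mul_X_pow_injective :
    Function.Injective fun b : Fin n → k⟦X⟧ => ∑ i, φ (b i) * X ^ (i : ℕ) := by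
  intro b c hbc
  by_contra hne
  obtain ⟨i, hi, hord⟩ :=
    exists_order_sum_map_mul_X_pow_eq hn hy hφX hφC hφcont (sub_ne_zero.mpr hne)
  have hzero : ∑ j, φ ((b - c) j) * X ^ (j : ℕ) = 0 := by
    simpa [sub_mul, sum_sub_distrib, sub_eq_zero] using hbc
  rw [hzero, order_zero, ← coe_toNat_order hi] at hord
  exact ENat.top_ne_natCast _ (by exact_mod_cast hord)

theorem exists_sum_map_mul_X_pow_eq (f : k⟦X⟧) :
    ∃ b : Fin n → k⟦X⟧, ∑ i, φ (b i) * X ^ (i : ℕ) = f := by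
  choose q hq using dvd_sub_trunc_of_order_eq hy
  -- `b i` collects the `i`-th coefficients of the successive quotients by `y`; then
  -- `f ≡ ∑ i, φ (b i) * X ^ i` modulo `X ^ (n * M)` for every `M`
  set b : ℕ → k⟦X⟧ := fun i => mk fun m => coeff i (q^[m] f)
  refine ⟨fun i => b i, (sub_eq_zero.mp (eq_zero_of_forall_X_pow_dvd fun M => ?_)).symm⟩
  have htel := eq_sum_pow_mul_add_pow_mul_iterate y (fun g => (trunc n g : k⟦X⟧)) q
    (fun g => (sub_eq_iff_eq_add'.mp (hq g))) f M
  have hrearr : ∑ i : Fin n, φ (trunc M (b i)) * X ^ (i : ℕ)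
      = ∑ m ∈ range M, y ^ m * (trunc n (q^[m] f) : k⟦X⟧) := by
    rw [Fin.sum_univ_eq_sum_range (fun i => φ (trunc M (b i)) * X ^ i)]
    have hcoe (g : k⟦X⟧) : (trunc n g : k⟦X⟧) = ∑ i ∈ range n, C (coeff i g) * X ^ i :=
      map_trunc_eq_sum_pow (φ := RingHom.id _) rfl (fun _ => rfl) g n
    simp_rw [map_trunc_eq_sum_pow hφX hφC, hcoe]
    simp_rw [b, coeff_mk, mul_sum, sum_mul]
    rw [sum_comm]
    exact sum_congr rfl fun _ _ => sum_congr rfl fun _ _ => by ring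
  have hdiff : f - ∑ i : Fin n, φ (b i) * X ^ (i : ℕ)
      = y ^ M * q^[M] f - ∑ i : Fin n, (φ (b i) - φ (trunc M (b i))) * X ^ (i : ℕ) := by
    simp_rw [sub_mul, sum_sub_distrib]
    linear_combination htel - hrearr
  refine (pow_dvd_pow X (Nat.le_mul_of_pos_left M hn)).trans ?_
  rw [hdiff]
  refine dvd_sub (dvd_mul_of_dvd_left ?_ _) (dvd_sum fun i _ => dvd_mul_of_dvd_left (hφcont _ M) _)
  rw [pow_mul]
  exact ((associated_X_pow_of_order_eq hy).pow_pow).dvd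

end Endomorphism

section Subfield

variable {k : Type*} [Field k] {n : ℕ} {y : k⟦X⟧} {φ : k⟦X⟧ →+* k⟦X⟧}
  {ψ : LaurentSeries k →+* LaurentSeries k}

theorem psToLaurent_sum_map_mul_X_pow (hφψ : ∀ f, psToLaurent k (φ f) = ψ (psToLaurent k f))
    (b : Fin n → k⟦X⟧) :
    psToLaurent k (∑ i, φ (b i) * X ^ (i : ℕ))
      = ∑ i, ψ (psToLaurent k (b i)) * psToLaurent k X ^ (i : ℕ) := by
  simp only [map_sum, map_mul, map_pow, hφψ]

variable (hn : 0 < n) (hy : y.order = n) (hφX : φ X = y) (hφC : ∀ a, φ (C a) = C a)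
  (hφcont : ∀ f m, X ^ (n * m) ∣ φ f - φ (trunc m f))
include hn hy hφX hφC hφcont

theorem exists_eq_pow_mul_order_pos_lt {b : Fin n → k⟦X⟧} (hb0 : b ⟨0, hn⟩ = 0) (hb : b ≠ 0) :
    ∃ (m : ℕ) (G : k⟦X⟧), ∑ i, φ (b i) * X ^ (i : ℕ) = y ^ m * G ∧ 0 < G.order ∧ G.order < n := by
  obtain ⟨i, hbi, hord⟩ := exists_order_sum_map_mul_X_pow_eq hn hy hφX hφC hφcont hb
  rw [← coe_toNat_order hbi] at hord
  set m := (b i).order.toNat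
  have hdvd : y ^ m ∣ ∑ i, φ (b i) * X ^ (i : ℕ) := by
    rw [← ((associated_X_pow_of_order_eq hy).pow_pow).dvd_iff_dvd_left, ← pow_mul]
    exact X_pow_dvd_iff.mpr fun j hj => coeff_of_lt_order j (by rw [hord]; norm_cast; omega)
  obtain ⟨G, hG⟩ := hdvd
  have hG0 : G ≠ 0 := by
    rintro rfl
    rw [hG, mul_zero, order_zero] at hord
    exact ENat.top_ne_natCast _ (by exact_mod_cast hord)
  have hGi : G.order = (i : ℕ) := by
    rw [hG, order_mul, order_pow, hy, nsmul_eq_mul, ← coe_toNat_order hG0] at hord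
    rw [← coe_toNat_order hG0]
    norm_cast at hord ⊢
    linarith [Nat.mul_comm m n]
  have hi0 : (i : ℕ) ≠ 0 := fun h => hbi (by rwa [show i = ⟨0, hn⟩ from Fin.ext h])
  refine ⟨m, G, hG, ?_, ?_⟩ <;> rw [hGi] <;> norm_cast
  exacts [Nat.pos_of_ne_zero hi0, i.isLt]

variable (hφψ : ∀ f, psToLaurent k (φ f) = ψ (psToLaurent k f)) {l : Subfield (LaurentSeries k)}
  (hEl : ψ.fieldRange ≤ l)
include hφψ

theorem existsUnique_sum_mul_X_pow_eq (f : k⟦X⟧) :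
    ∃! a : Fin n → LaurentSeries k,
      (∀ i, a i ∈ (ψ.comp (psToLaurent k)).range) ∧
      psToLaurent k f = ∑ i, a i * psToLaurent k X ^ (i : ℕ) := by
  obtain ⟨b, hb⟩ := exists_sum_map_mul_X_pow_eq hn hy hφX hφC hφcont f
  refine ⟨fun i => ψ (psToLaurent k (b i)), ⟨fun i => ⟨b i, rfl⟩, ?_⟩, ?_⟩
  · rw [← hb, psToLaurent_sum_map_mul_X_pow hφψ]
  rintro a ⟨ha, hsum⟩
  choose c hc using ha
  have hcb : c = b :=
    sum_map_mul_X_pow_injective hn hy hφX hφC hφcont <| psToLaurent_injective <| by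
      simp only [psToLaurent_sum_map_mul_X_pow hφψ, ← RingHom.comp_apply ψ, hc, ← hsum, hb]
  funext i
  rw [← hc, hcb, RingHom.comp_apply]

include hEl in
theorem exists_mem_range_order_pos_lt {a : Fin n → LaurentSeries k}
    (ha : ∀ i, a i ∈ (ψ.comp (psToLaurent k)).range)
    (hmem : ∑ i, a i * psToLaurent k X ^ (i : ℕ) ∈ l) (hne : ∃ i : Fin n, 0 < (i : ℕ) ∧ a i ≠ 0) :
    ∃ g ∈ l, g ∈ (psToLaurent k).range ∧ 0 < g.order ∧ g.order < n := by
  classical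
  choose c hc using ha
  let i₀ : Fin n := ⟨0, hn⟩
  have hb : Function.update c i₀ 0 ≠ 0 := by
    obtain ⟨i, hi, hai⟩ := hne
    refine Function.ne_iff.mpr ⟨i, ?_⟩
    rw [Function.update_of_ne fun h => hi.ne' (congrArg Fin.val h)]
    rintro hci
    exact hai (by rw [← hc, hci, Pi.zero_apply, map_zero])
  obtain ⟨m, G, hFG, hpos, hlt⟩ :=
    exists_eq_pow_mul_order_pos_lt hn hy hφX hφC hφcont (Function.update_self i₀ 0 c) hb
  have hF : psToLaurent k (∑ i, φ (Function.update c i₀ 0 i) * X ^ (i : ℕ))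
      = ∑ i, a i * psToLaurent k X ^ (i : ℕ) - a i₀ := by
    have hterm : ∀ i ∈ univ.erase i₀, ψ (psToLaurent k (Function.update c i₀ 0 i)) *
        psToLaurent k X ^ (i : ℕ) = a i * psToLaurent k X ^ (i : ℕ) := fun i hi => by
      rw [Function.update_of_ne (ne_of_mem_erase hi), ← hc, RingHom.comp_apply]
    rw [psToLaurent_sum_map_mul_X_pow hφψ, ← add_sum_erase _ _ (mem_univ i₀),
      ← add_sum_erase _ _ (mem_univ i₀), sum_congr rfl hterm, Function.update_self, map_zero,
      map_zero, zero_mul, zero_add, show (i₀ : ℕ) = 0 from rfl, pow_zero, mul_one,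
      add_sub_cancel_left]
  have hyL : psToLaurent k y ∈ l := hEl ⟨psToLaurent k X, by rw [← hφψ, hφX]⟩
  have hy0 : psToLaurent k y ≠ 0 := by
    rw [map_ne_zero_iff _ psToLaurent_injective]
    rintro rfl
    simp at hy
  have hG0 : G ≠ 0 := by
    rintro rfl
    simp at hlt
  refine ⟨psToLaurent k G, ?_, ⟨G, rfl⟩, ?_⟩
  · have hG : psToLaurent k G = (psToLaurent k y ^ m)⁻¹ *
        psToLaurent k (∑ i, φ (Function.update c i₀ 0 i) * X ^ (i : ℕ)) := by
      rw [hFG, map_mul, map_pow, inv_mul_cancel_left₀ (pow_ne_zero _ hy0)]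
    rw [hG, hF]
    exact mul_mem (inv_mem (pow_mem hyL m)) (sub_mem hmem (hEl ⟨_, hc i₀⟩))
  · rw [order_psToLaurent]
    rw [← coe_toNat_order hG0] at hpos hlt
    exact ⟨by exact_mod_cast hpos, by exact_mod_cast hlt⟩

include hEl in
theorem le_fieldRange_of_forall_le_order
    (hord : ∀ g ∈ l, g ∈ (psToLaurent k).range → g ≠ 0 → 0 < g.order → (n : ℤ) ≤ g.order) :
    l ≤ ψ.fieldRange := by
  intro u hu
  rcases eq_or_ne u 0 with rfl | hu0
  · exact zero_mem _
  set N := u.order.natAbs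
  have hyψ : psToLaurent k y = ψ (psToLaurent k X) := by rw [← hφψ, hφX]
  have hyN0 : psToLaurent k (y ^ N) ≠ 0 := by
    rw [map_ne_zero_iff _ psToLaurent_injective]
    refine pow_ne_zero _ ?_
    rintro rfl
    simp at hy
  have hwl : psToLaurent k (y ^ N) * u ∈ l := by
    rw [map_pow, hyψ]
    exact mul_mem (pow_mem (hEl ⟨_, rfl⟩) N) hu
  -- `y ^ N` clears the pole of `u`, since `ord (y ^ N) = n * N ≥ |ord u|`
  obtain ⟨f, hf⟩ : psToLaurent k (y ^ N) * u ∈ (psToLaurent k).range := by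
    apply mem_range_psToLaurent_of_order_nonneg
    rw [HahnSeries.order_mul hyN0 hu0, order_psToLaurent, order_pow, hy, nsmul_eq_mul,
      ← Nat.cast_mul, ENat.toNat_natCast, Nat.cast_mul, Int.natCast_natAbs]
    nlinarith [neg_abs_le u.order, abs_nonneg u.order, (Nat.one_le_cast (α := ℤ)).mpr hn]
  obtain ⟨a, ⟨ha, hsum⟩, -⟩ := existsUnique_sum_mul_X_pow_eq hn hy hφX hφC hφcont hφψ f
  have hvanish : ∀ i : Fin n, 0 < (i : ℕ) → a i = 0 := by
    by_contra! h
    obtain ⟨g, hgl, hgr, hpos, hlt⟩ :=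
      exists_mem_range_order_pos_lt hn hy hφX hφC hφcont hφψ hEl ha (by rwa [← hsum, hf]) h
    have hg0 : g ≠ 0 := by
      rintro rfl
      simp at hpos
    exact hlt.not_ge (hord g hgl hgr hg0 hpos)
  obtain ⟨c, hc⟩ := ha ⟨0, hn⟩
  have hw : psToLaurent k (y ^ N) * u = ψ (psToLaurent k c) := by
    rw [← hf, hsum, sum_eq_single ⟨0, hn⟩ (fun i _ hi => by
      rw [hvanish i (Nat.pos_of_ne_zero fun h => hi (Fin.ext h)), zero_mul]) (by simp)]
    simp [← hc]
  rw [← inv_mul_cancel_left₀ hyN0 u, hw, map_pow, hyψ]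
  exact mul_mem (inv_mem (pow_mem (ψ.mem_fieldRange_self _) N)) (ψ.mem_fieldRange_self _)

end Subfield

theorem exists_powerSeries_restriction {k : Type*} [Field k] {n : ℕ} {y : k⟦X⟧}
    {ψ : LaurentSeries k →+* LaurentSeries k} (hψX : ψ (psToLaurent k X) = psToLaurent k y)
    (hψC : ∀ a, ψ (psToLaurent k (C a)) = psToLaurent k (C a))
    (hψcont : ∀ f m, ∃ g, ψ (psToLaurent k f) - ψ (psToLaurent k (trunc m f)) =
      psToLaurent k X ^ (n * m) * psToLaurent k g) :
    ∃ φ : k⟦X⟧ →+* k⟦X⟧, (∀ f, psToLaurent k (φ f) = ψ (psToLaurent k f)) ∧ φ X = y ∧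
      (∀ a, φ (C a) = C a) ∧ ∀ f m, X ^ (n * m) ∣ φ f - φ (trunc m f) := by
  have hrange : (ψ.comp (psToLaurent k)).range ≤ (psToLaurent k).range := by
    -- continuity at `m = 0`
    rintro _ ⟨f, rfl⟩
    obtain ⟨g, hg⟩ := hψcont f 0
    exact ⟨g, by simpa using hg.symm⟩
  obtain ⟨φ, hφ⟩ := RingHom.exists_comp_eq_of_range_le psToLaurent_injective hrange
  have hφψ (f : k⟦X⟧) : psToLaurent k (φ f) = ψ (psToLaurent k f) := RingHom.congr_fun hφ f
  refine ⟨φ, hφψ, psToLaurent_injective ?_, fun a => psToLaurent_injective ?_, fun f m => ?_⟩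
  · rw [hφψ, hψX]
  · rw [hφψ, hψC]
  · obtain ⟨g, hg⟩ := hψcont f m
    exact ⟨g, psToLaurent_injective (by rw [map_sub, hφψ, hφψ, hg, map_mul, map_pow])⟩

/-- Let `k` be a field, `n ≥ 1` and `y ∈ k[[x]]` with
`ord_x(y) = n`.  The subfield `k((y)) ⊆ k((x))` is realized as the range of the
substitution embedding `ψ : k((Y)) → k((x))`, `Y ↦ y` (a field embedding fixing
`k`, sending `X` to `y`, and continuous in the sense that it commutes with
truncation up to order `n·m`).  Let `l` be an intermediate field
`k((y)) ⊆ l ⊆ k((x))` such that every `g ∈ l ∩ k[[x]]` with `0 < ord_x(g)`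
satisfies `ord_x(g) ≥ n`.  Then `l = k((y))`.  More precisely, every element of
`l ∩ k[[x]]` is uniquely `a_0 + a_1 x + ⋯ + a_{n-1} x^{n-1}` with
`a_i ∈ k[[y]]`, and unless `a_1 = ⋯ = a_{n-1} = 0` one can produce an element
`g'` of `l ∩ k[[x]]` with `0 < ord_x(g') < n`. -/
theorem intermediate_field_of_laurent (k : Type*) [Field k] (n : ℕ) (hn : 1 ≤ n)
    (y : PowerSeries k) (hy : y.order = n)
    (ψ : LaurentSeries k →+* LaurentSeries k)
    (hψX : ψ (psToLaurent k PowerSeries.X) = psToLaurent k y)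
    (hψC : ∀ a : k, ψ (psToLaurent k (PowerSeries.C (R := k) a)) = psToLaurent k (PowerSeries.C (R := k) a))
    (hψcont : ∀ (f : PowerSeries k) (m : ℕ), ∃ g : PowerSeries k,
      ψ (psToLaurent k f) -
          ψ (psToLaurent k ((PowerSeries.trunc m f : Polynomial k) : PowerSeries k)) =
        psToLaurent k PowerSeries.X ^ (n * m) * psToLaurent k g)
    (l : Subfield (LaurentSeries k))
    (hEl : ψ.fieldRange ≤ l)
    (hord : ∀ g : LaurentSeries k, g ∈ l → g ∈ (psToLaurent k).range →
      g ≠ 0 → 0 < g.order → (n : ℤ) ≤ g.order) :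
    l = ψ.fieldRange ∧
    (∀ g : LaurentSeries k, g ∈ l → g ∈ (psToLaurent k).range →
      ∃! a : Fin n → LaurentSeries k,
        (∀ i : Fin n, a i ∈ (ψ.comp (psToLaurent k)).range) ∧
        g = ∑ i : Fin n, a i * psToLaurent k PowerSeries.X ^ (i : ℕ)) ∧
    (∀ a : Fin n → LaurentSeries k,
      (∀ i : Fin n, a i ∈ (ψ.comp (psToLaurent k)).range) →
      (∑ i : Fin n, a i * psToLaurent k PowerSeries.X ^ (i : ℕ)) ∈ l →
      (∃ i : Fin n, 0 < (i : ℕ) ∧ a i ≠ 0) →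
      ∃ g' : LaurentSeries k, g' ∈ l ∧ g' ∈ (psToLaurent k).range ∧
        0 < g'.order ∧ g'.order < (n : ℤ)) := by
  obtain ⟨φ, hφψ, hφX, hφC, hφcont⟩ := exists_powerSeries_restriction hψX hψC hψcont
  refine ⟨le_antisymm ?_ hEl, ?_, ?_⟩
  · exact le_fieldRange_of_forall_le_order hn hy hφX hφC hφcont hφψ hEl hord
  · rintro _ - ⟨f, rfl⟩
    exact existsUnique_sum_mul_X_pow_eq hn hy hφX hφC hφcont hφψ f
  · intro a ha hmem hne
    exact exists_mem_range_order_pos_lt hn hy hφX hφC hφcont hφψ hEl ha hmem hne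
end
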